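/- arXiv:1910.04322 — 4 statements merged into one kernel-verified Lean document; each statement's English description precedes it below -/
import Mathlib

section
/- Let (A_t)_{t≥1} be a sequence of nonnegative reals, α ∈ (0,1], and C > 0 such that A_1 ≤ C, A_2 ≤ C·2^{-α}, and for all t ≥ 2, A_{t+1} ≤ (1 - t^{-α})^2 A_t + K t^{-2α} + M t^{-2α} √(A_t), where K ≤ (2 - 2^{-α} - α) C / 2 and M ≤ C^{1/4}. Then A_t ≤ C t^{-α} for all t ≥ 1, provided C ≥ (2/(2-2^{-α}-α))^4. -/
/-- Key one-step decay: `x^{-α} - α (x^{-α})² ≤ (x+1)^{-α}` for `x ≥ 2`, `α ∈ (0,1]`. -/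
lemma decay_step (α x : ℝ) (hα0 : 0 < α) (hα1 : α ≤ 1) (hx : 2 ≤ x) :
    x ^ (-α) - α * (x ^ (-α))^2 ≤ (x + 1) ^ (-α) := by
  have hx0 : (0:ℝ) < x := by linarith
  have hx1 : (1:ℝ) ≤ x := by linarith
  have hu0 : 0 < x ^ (-α) := Real.rpow_pos_of_pos hx0 _
  set s : ℝ := 1 / x with hs
  have hs0 : 0 < s := by positivity
  have hs2 : s ≤ 1 / 2 := by
    rw [hs, div_le_div_iff₀ hx0 (by norm_num)]; linarith
  -- x^{-1} ≤ x^{-α}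
  have e1 : x⁻¹ ≤ x ^ (-α) := by
    rw [← Real.rpow_neg_one]
    exact Real.rpow_le_rpow_of_exponent_le hx1 (by linarith)
  -- 1 - α x^{-α} ≤ 1 - α s
  have e2 : 1 - α * x ^ (-α) ≤ 1 - α * s := by
    have : α * s ≤ α * x ^ (-α) := by
      rw [hs, one_div]; exact mul_le_mul_of_nonneg_left e1 hα0.le
    linarith
  -- Bernoulli : (1+s)^α ≤ 1 + α s
  have hb : (1 + s) ^ α ≤ 1 + α * s :=
    rpow_one_add_le_one_add_mul_self (by linarith) hα0.le hα1
  have hb0 : 0 < (1 + s) ^ α := Real.rpow_pos_of_pos (by linarith) _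
  -- 1 - α s ≤ (1+s)^{-α}
  have e3 : 1 - α * s ≤ (1 + s) ^ (-α) := by
    rw [Real.rpow_neg (by linarith : (0:ℝ) ≤ 1 + s), inv_eq_one_div,
      le_div_iff₀ hb0]
    have hαs : α * s ≤ 1/2 := by nlinarith
    have h1as : 0 ≤ 1 - α * s := by linarith
    nlinarith [mul_le_mul_of_nonneg_left hb h1as, sq_nonneg (α * s)]
  -- combine
  have key : x ^ (-α) * (1 - α * x ^ (-α)) ≤ x ^ (-α) * (1 + s) ^ (-α) :=
    mul_le_mul_of_nonneg_left (e2.trans e3) hu0.le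
  have hxs : x * (1 + s) = x + 1 := by rw [hs]; field_simp
  calc x ^ (-α) - α * (x ^ (-α))^2 = x ^ (-α) * (1 - α * x ^ (-α)) := by ring
    _ ≤ x ^ (-α) * (1 + s) ^ (-α) := key
    _ = (x + 1) ^ (-α) := by
        rw [← Real.mul_rpow hx0.le (by linarith : (0:ℝ) ≤ 1 + s), hxs]

theorem stmt_5 (α C K M : ℝ) (A : ℕ → ℝ)
    (hα : α ∈ Set.Ioc (0:ℝ) 1) (hC : 0 < C)
    (hCbig : ((2 / (2 - (2:ℝ)^(-α) - α)) ^ (4:ℕ)) ≤ C)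
    (hAnonneg : ∀ t, 0 ≤ A t)
    (hA1 : A 1 ≤ C)
    (hA2 : A 2 ≤ C * (2:ℝ)^(-α))
    (hK : K ≤ (2 - (2:ℝ)^(-α) - α) * C / 2)
    (hM : M ≤ C ^ ((1:ℝ)/4))
    (hrec : ∀ t : ℕ, 2 ≤ t →
      A (t + 1) ≤ (1 - (t:ℝ)^(-α))^2 * A t + K * (t:ℝ)^(-(2*α))
        + M * (t:ℝ)^(-(2*α)) * Real.sqrt (A t)) :
    ∀ t : ℕ, 1 ≤ t → A t ≤ C * (t:ℝ)^(-α) := by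
  obtain ⟨hα0, hα1⟩ := hα
  set D : ℝ := 2 - (2:ℝ)^(-α) - α with hDdef
  have h2a0 : (0:ℝ) < (2:ℝ)^(-α) := Real.rpow_pos_of_pos (by norm_num) _
  have h2a1 : (2:ℝ)^(-α) < 1 :=
    Real.rpow_lt_one_of_one_lt_of_neg (by norm_num) (by linarith)
  have hD0 : 0 < D := by rw [hDdef]; linarith
  -- C^{3/4} ≤ D*C/2, equivalently 2/D ≤ C^{1/4}
  have hC14 : 2 / D ≤ C ^ ((1:ℝ)/4) := by
    have h1 : ((2 / D) ^ (4:ℕ) : ℝ) ^ ((1:ℝ)/4) ≤ C ^ ((1:ℝ)/4) :=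
      Real.rpow_le_rpow (by positivity) hCbig (by norm_num)
    calc 2 / D = (((2/D) ^ (4:ℕ) : ℝ)) ^ ((1:ℝ)/4) := by
          rw [← Real.rpow_natCast (2/D) 4, ← Real.rpow_mul (by positivity)]
          norm_num
      _ ≤ C ^ ((1:ℝ)/4) := h1
  have hC34 : C ^ ((1:ℝ)/4) * Real.sqrt C ≤ D * C / 2 := by
    have hsq : Real.sqrt C = C ^ ((1:ℝ)/2) := by
      rw [Real.sqrt_eq_rpow]
    have h34 : C ^ ((1:ℝ)/4) * C ^ ((1:ℝ)/2) = C ^ ((3:ℝ)/4) := by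
      rw [← Real.rpow_add hC]; norm_num
    have hCq : C ^ ((1:ℝ)/4) * C ^ ((3:ℝ)/4) = C := by
      rw [← Real.rpow_add hC]; norm_num
    rw [hsq, h34]
    have hp34 : 0 < C ^ ((3:ℝ)/4) := Real.rpow_pos_of_pos hC _
    have h2 : 2 ≤ D * C ^ ((1:ℝ)/4) := by
      rw [div_le_iff₀ hD0] at hC14; linarith [hC14]
    have h3 : 2 * C ^ ((3:ℝ)/4) ≤ D * C ^ ((1:ℝ)/4) * C ^ ((3:ℝ)/4) :=
      mul_le_mul_of_nonneg_right h2 hp34.le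
    rw [mul_assoc, hCq] at h3
    linarith
  clear_value D
  -- main induction
  intro t ht
  induction t, ht using Nat.le_induction with
  | base =>
    simp only [Nat.cast_one, Real.one_rpow, mul_one]
    exact hA1
  | succ n hn IH =>
    rcases eq_or_lt_of_le hn with h1 | h2
    · -- n = 1
      subst h1
      have hc2 : ((1+1:ℕ):ℝ) = 2 := by norm_num
      rw [hc2]
      exact hA2
    · -- n ≥ 2
      have hn2 : 2 ≤ n := h2
      have hx2 : (2:ℝ) ≤ (n:ℝ) := by exact_mod_cast hn2
      set x : ℝ := (n:ℝ) with hxdef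
      have hx0 : (0:ℝ) < x := by linarith
      set u : ℝ := x ^ (-α) with hudef
      have hu0 : 0 < u := Real.rpow_pos_of_pos hx0 _
      have hu1 : u ≤ 1 := Real.rpow_le_one_of_one_le_of_nonpos (by linarith) (by linarith)
      have hu2 : u ≤ (2:ℝ)^(-α) :=
        Real.rpow_le_rpow_of_nonpos (by norm_num) hx2 (by linarith)
      have husq : x ^ (-(2*α)) = u^2 := by
        rw [hudef, show -(2*α) = (-α) * 2 by ring, Real.rpow_mul hx0.le, Real.rpow_two]
      have hrecn := hrec n hn2
      rw [← hxdef, husq, ← hudef] at hrecn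
      have hcast : ((n+1 : ℕ) : ℝ) = x + 1 := by push_cast [hxdef]; ring
      have hdec : x ^ (-α) - α * (x ^ (-α))^2 ≤ (x + 1) ^ (-α) :=
        decay_step α x hα0 hα1 hx2
      rw [← hudef] at hdec
      clear_value x u
      have hsqrt : Real.sqrt (A n) ≤ Real.sqrt C * Real.sqrt u := by
        rw [← Real.sqrt_mul hC.le]
        exact Real.sqrt_le_sqrt IH
      have hsu0 : 0 ≤ Real.sqrt (A n) := Real.sqrt_nonneg _
      have hsu1 : Real.sqrt u ≤ 1 := by
        rw [show (1:ℝ) = Real.sqrt 1 by simp]; exact Real.sqrt_le_sqrt hu1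
      -- bound each term
      have t1 : (1 - u)^2 * A n ≤ (1 - u)^2 * (C * u) :=
        mul_le_mul_of_nonneg_left IH (sq_nonneg _)
      have t2 : K * u^2 ≤ (D * C / 2) * u^2 :=
        mul_le_mul_of_nonneg_right hK (sq_nonneg _)
      have t3 : M * u^2 * Real.sqrt (A n) ≤ (D * C / 2) * u^2 := by
        have s1 : M * u^2 * Real.sqrt (A n) ≤ C ^ ((1:ℝ)/4) * u^2 * Real.sqrt (A n) := by
          apply mul_le_mul_of_nonneg_right _ hsu0
          exact mul_le_mul_of_nonneg_right hM (sq_nonneg _)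
        have hC4 : 0 < C ^ ((1:ℝ)/4) := Real.rpow_pos_of_pos hC _
        have s2 : C ^ ((1:ℝ)/4) * u^2 * Real.sqrt (A n)
            ≤ C ^ ((1:ℝ)/4) * u^2 * (Real.sqrt C * Real.sqrt u) :=
          mul_le_mul_of_nonneg_left hsqrt (by positivity)
        have s3 : C ^ ((1:ℝ)/4) * u^2 * (Real.sqrt C * Real.sqrt u)
            ≤ (D * C / 2) * u^2 := by
          have h0 : 0 ≤ C ^ ((1:ℝ)/4) * Real.sqrt C := by positivity
          have hstep : C ^ ((1:ℝ)/4) * Real.sqrt C * Real.sqrt u ≤ D * C / 2 := by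
            calc C ^ ((1:ℝ)/4) * Real.sqrt C * Real.sqrt u
                ≤ C ^ ((1:ℝ)/4) * Real.sqrt C * 1 :=
                  mul_le_mul_of_nonneg_left hsu1 h0
              _ = C ^ ((1:ℝ)/4) * Real.sqrt C := by ring
              _ ≤ D * C / 2 := hC34
          calc C ^ ((1:ℝ)/4) * u^2 * (Real.sqrt C * Real.sqrt u)
              = C ^ ((1:ℝ)/4) * Real.sqrt C * Real.sqrt u * u^2 := by ring
            _ ≤ (D * C / 2) * u^2 :=
                mul_le_mul_of_nonneg_right hstep (sq_nonneg u)
        linarith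
      -- combine
      have hcomb : A (n+1) ≤ C * u - α * C * u^2 := by
        have key : (1-u)^2 * (C*u) + (D*C/2)*u^2 + (D*C/2)*u^2 ≤ C*u - α*C*u^2 := by
          have : (1-u)^2 * (C*u) + (D*C/2)*u^2 + (D*C/2)*u^2 - (C*u - α*C*u^2)
              = C * u^2 * (u - (2:ℝ)^(-α)) := by rw [hDdef]; ring
          have hneg : C * u^2 * (u - (2:ℝ)^(-α)) ≤ 0 :=
            mul_nonpos_of_nonneg_of_nonpos (by positivity) (by linarith)
          linarith
        linarith
      rw [hcast]
      calc A (n+1) ≤ C * u - α * C * u^2 := hcomb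
        _ = C * (u - α * u^2) := by ring
        _ ≤ C * (x + 1) ^ (-α) := mul_le_mul_of_nonneg_left (by linarith [hdec]) hC.le
end

section
/- Let (a_t) be nonnegative reals satisfying a_{t+1} ≤ (1 - 1/t) a_t + (D√C) t^{-3/2} + (L D² / 2) t^{-2} for t = 1,...,T, with D, C, L ≥ 0. Then a_{T+1} ≤ 2√C D / √T + L D² (1 + ln T)/(2T). -/
/-!
Multiplying the recursion at step `t` by `t` turns it into
`t a (t+1) - (t-1) a t ≤ D √C t^(-1/2) + (L D² / 2) t⁻¹`, whose left side telescopes (the term at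
`t = 1` vanishes). Hence `T a (T+1)` is at most `D √C ∑ t^(-1/2) + (L D² / 2) ∑ t⁻¹`, and the two
sums are at most `2 √T` and `1 + log T`.
-/

open Finset Real

lemma natCast_mul_le_sum_of_le_one_sub_inv_mul_add {T : ℕ} (hT : 1 ≤ T) (a b : ℕ → ℝ)
    (h : ∀ t ∈ Icc 1 T, a (t + 1) ≤ (1 - 1 / (t : ℝ)) * a t + b t) :
    (T : ℝ) * a (T + 1) ≤ ∑ t ∈ Icc 1 T, (t : ℝ) * b t := by
  let f : ℕ → ℝ := fun t => ((t : ℝ) - 1) * a t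
  have hstep : ∀ t ∈ Icc 1 T, f (t + 1) - f t ≤ (t : ℝ) * b t := by
    intro t ht
    have ht0 : (0 : ℝ) < t := by exact_mod_cast (mem_Icc.mp ht).1
    have hcoeff : (t : ℝ) * (1 - 1 / (t : ℝ)) = t - 1 := by field_simp
    have hscaled := mul_le_mul_of_nonneg_left (h t ht) ht0.le
    rw [mul_add, ← mul_assoc, hcoeff] at hscaled
    simp only [f, Nat.cast_add, Nat.cast_one, add_sub_cancel_right]
    linarith
  calc (T : ℝ) * a (T + 1) = f (T + 1) - f 1 := by simp [f]
    _ = ∑ t ∈ Icc 1 T, (f (t + 1) - f t) := (sum_Icc_sub hT f).symm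
    _ ≤ ∑ t ∈ Icc 1 T, (t : ℝ) * b t := sum_le_sum hstep

lemma rpow_neg_half_le_two_mul_sqrt_sub {t : ℝ} (ht : 1 ≤ t) :
    t ^ (-(1 / 2 : ℝ)) ≤ 2 * √t - 2 * √(t - 1) := by
  have hsqrt_pos : 0 < √t := sqrt_pos.mpr (by linarith)
  have hsq : √t ^ 2 = t := sq_sqrt (by linarith)
  have hsq' : √(t - 1) ^ 2 = t - 1 := sq_sqrt (by linarith)
  rw [rpow_neg (by linarith), ← sqrt_eq_rpow, inv_le_iff_one_le_mul₀ hsqrt_pos]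
  -- `2 √t √(t-1) ≤ t + (t - 1)` by AM-GM
  nlinarith [sq_nonneg (√t - √(t - 1))]

lemma sum_Icc_rpow_neg_half_le (T : ℕ) :
    ∑ t ∈ Icc 1 T, (t : ℝ) ^ (-(1 / 2 : ℝ)) ≤ 2 * √T := by
  rcases Nat.eq_zero_or_pos T with rfl | hT
  · simp
  have htelescope := sum_Icc_sub hT (fun t : ℕ => 2 * √((t : ℝ) - 1))
  simp only [Nat.cast_add, Nat.cast_one, add_sub_cancel_right, sub_self, sqrt_zero,
    mul_zero, sub_zero] at htelescope
  calc ∑ t ∈ Icc 1 T, (t : ℝ) ^ (-(1 / 2 : ℝ))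
      ≤ ∑ t ∈ Icc 1 T, (2 * √(t : ℝ) - 2 * √((t : ℝ) - 1)) := by
        exact sum_le_sum fun t ht =>
          rpow_neg_half_le_two_mul_sqrt_sub (by exact_mod_cast (mem_Icc.mp ht).1)
    _ = 2 * √T := htelescope

lemma sum_Icc_inv_le_one_add_log (T : ℕ) : ∑ t ∈ Icc 1 T, (t : ℝ)⁻¹ ≤ 1 + log T := by
  simpa only [harmonic_eq_sum_Icc, Rat.cast_sum, Rat.cast_inv, Rat.cast_natCast] using
    harmonic_le_one_add_log T

lemma mul_rpow_neg_three_halves {t : ℝ} (ht : t ≠ 0) :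
    t * t ^ (-(3 / 2 : ℝ)) = t ^ (-(1 / 2 : ℝ)) := by
  rw [mul_comm, ← rpow_add_one ht]; norm_num

lemma mul_rpow_neg_two {t : ℝ} (ht : t ≠ 0) : t * t ^ (-(2 : ℝ)) = t⁻¹ := by
  rw [mul_comm, ← rpow_add_one ht]; norm_num [rpow_neg_one]

theorem stmt_7_general (T : ℕ) (hT : 1 ≤ T) (a : ℕ → ℝ) (D C L : ℝ)
    (hD : 0 ≤ D) (hL : 0 ≤ L)
    (hrec : ∀ t ∈ Finset.Icc 1 T,
      a (t + 1) ≤ (1 - 1 / (t:ℝ)) * a t + (D * Real.sqrt C) * (t:ℝ)^(-(3/2 : ℝ))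
        + (L * D^2 / 2) * (t:ℝ)^(-(2:ℝ))) :
    a (T + 1) ≤ 2 * Real.sqrt C * D / Real.sqrt T + L * D^2 * (1 + Real.log T) / (2 * T) := by
  have hT0 : (0 : ℝ) < T := by exact_mod_cast hT
  have hweighted := natCast_mul_le_sum_of_le_one_sub_inv_mul_add hT a _
    fun t ht => (hrec t ht).trans_eq (add_assoc _ _ _)
  have hsum : ∑ t ∈ Icc 1 T, (t : ℝ) * (D * √C * (t : ℝ) ^ (-(3 / 2 : ℝ))
        + L * D ^ 2 / 2 * (t : ℝ) ^ (-(2 : ℝ)))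
      ≤ D * √C * (2 * √T) + L * D ^ 2 / 2 * (1 + log T) := by
    calc _ = D * √C * ∑ t ∈ Icc 1 T, (t : ℝ) ^ (-(1 / 2 : ℝ))
          + L * D ^ 2 / 2 * ∑ t ∈ Icc 1 T, (t : ℝ)⁻¹ := by
          rw [mul_sum, mul_sum, ← sum_add_distrib]
          refine sum_congr rfl fun t ht => ?_
          have ht0 : (t : ℝ) ≠ 0 := by have := (mem_Icc.mp ht).1; positivity
          rw [← mul_rpow_neg_three_halves ht0, ← mul_rpow_neg_two ht0]; ring
      _ ≤ _ := by
          gcongr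
          exacts [sum_Icc_rpow_neg_half_le T, sum_Icc_inv_le_one_add_log T]
  rw [← le_div_iff₀' hT0] at hweighted
  refine (hweighted.trans (div_le_div_of_nonneg_right hsum hT0.le)).trans_eq ?_
  have hsqrt : √(T : ℝ) ≠ 0 := (sqrt_pos.mpr hT0).ne'
  field_simp
  linear_combination 4 * D * √C * mul_self_sqrt hT0.le

theorem stmt_7 (T : ℕ) (hT : 1 ≤ T) (a : ℕ → ℝ) (D C L : ℝ)
    (hD : 0 ≤ D) (hC : 0 ≤ C) (hL : 0 ≤ L)
    (ha : ∀ t, 0 ≤ a t)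
    (hrec : ∀ t ∈ Finset.Icc 1 T,
      a (t + 1) ≤ (1 - 1 / (t:ℝ)) * a t + (D * Real.sqrt C) * (t:ℝ)^(-(3/2 : ℝ))
        + (L * D^2 / 2) * (t:ℝ)^(-(2:ℝ))) :
    a (T + 1) ≤ 2 * Real.sqrt C * D / Real.sqrt T + L * D^2 * (1 + Real.log T) / (2 * T) :=
  stmt_7_general T hT a D C L hD hL hrec
end

section
/- Let F : ℝ^d → ℝ be differentiable and L-smooth (gradient L-Lipschitz) on a convex compact set K of diameter D. Let x_{t+1} = x_t + η(v - x_t) with x_t, v ∈ K and η ∈ [0,1], and let G(x_t) = max_{u∈K} ⟨u - x_t, -∇F(x_t)⟩ be the Frank–Wolfe gap. If v minimizes ⟨u, d⟩ over u ∈ K for some vector d, then η·G(x_t) ≤ F(x_t) - F(x_{t+1}) + η D ‖∇F(x_t) - d‖ + L η² D² / 2. -/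
open RealInnerProductSpace

theorem stmt_8 (d : ℕ) (F : EuclideanSpace ℝ (Fin d) → ℝ)
    (gradF : EuclideanSpace ℝ (Fin d) → EuclideanSpace ℝ (Fin d))
    (K : Set (EuclideanSpace ℝ (Fin d))) (hKconv : Convex ℝ K) (hKcomp : IsCompact K)
    (D L η Gx : ℝ) (hL : 0 ≤ L) (hη : η ∈ Set.Icc (0:ℝ) 1)
    (hD : ∀ x ∈ K, ∀ y ∈ K, ‖x - y‖ ≤ D)
    (hsmooth : ∀ x ∈ K, ∀ y ∈ K, F y ≤ F x + ⟪gradF x, y - x⟫ + L / 2 * ‖y - x‖^2)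
    (xt v : EuclideanSpace ℝ (Fin d)) (hxt : xt ∈ K) (hv : v ∈ K)
    (dvec : EuclideanSpace ℝ (Fin d))
    (hvmin : ∀ u ∈ K, ⟪v, dvec⟫ ≤ ⟪u, dvec⟫)
    (hGx : IsGreatest ((fun u => ⟪u - xt, -gradF xt⟫) '' K) Gx) :
    η * Gx ≤ F xt - F (xt + η • (v - xt)) + η * D * ‖gradF xt - dvec‖ + L * η^2 * D^2 / 2 := by
  obtain ⟨hη0, hη1⟩ := hη
  obtain ⟨⟨u, hu, huGx⟩, _⟩ := hGx
  have hD0 : (0:ℝ) ≤ D := le_trans (by simp) (hD xt hxt xt hxt)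
  set g := gradF xt with hg
  -- y ∈ K
  have hy : xt + η • (v - xt) ∈ K := by
    have := hKconv hxt hv (by linarith : (0:ℝ) ≤ 1 - η) hη0 (by ring)
    convert this using 1
    module
  -- smoothness
  have hsm := hsmooth xt hxt _ hy
  have hyx : xt + η • (v - xt) - xt = η • (v - xt) := by module
  rw [hyx] at hsm
  have hnorm2 : ‖η • (v - xt)‖^2 = η^2 * ‖v - xt‖^2 := by
    rw [norm_smul, mul_pow]; simp [abs_of_nonneg hη0]
  have hinner : ⟪g, η • (v - xt)⟫ = η * ⟪g, v - xt⟫ := by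
    rw [real_inner_smul_right]
  rw [hnorm2, hinner] at hsm
  -- bound on Gx
  have hgap : Gx ≤ -⟪g, v - xt⟫ + D * ‖g - dvec‖ := by
    have h1 : ⟪v - u, dvec⟫ ≤ 0 := by
      have := hvmin u hu
      rw [inner_sub_left]; linarith [this]
    have h2 : ⟪v - u, g - dvec⟫ ≤ ‖v - u‖ * ‖g - dvec‖ :=
      real_inner_le_norm _ _
    have h3 : ‖v - u‖ ≤ D := hD v hv u hu
    have h4 : ⟪v - u, g⟫ ≤ D * ‖g - dvec‖ := by
      have : ⟪v - u, g⟫ = ⟪v - u, g - dvec⟫ + ⟪v - u, dvec⟫ := by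
        rw [inner_sub_right]; ring
      nlinarith [norm_nonneg (g - dvec)]
    have hGxval : Gx = ⟪u - xt, -g⟫ := huGx.symm
    have key : ⟪u - xt, -g⟫ = -⟪g, v - xt⟫ + ⟪v - u, g⟫ := by
      rw [inner_neg_right, inner_sub_left, inner_sub_left, inner_sub_right,
        real_inner_comm g v, real_inner_comm g xt]
      ring
    rw [hGxval, key]
    linarith
  have hvxD : ‖v - xt‖ ≤ D := hD v hv xt hxt
  have hη2 : (0:ℝ) ≤ η^2 := sq_nonneg η
  nlinarith [mul_le_mul_of_nonneg_left hgap hη0, sq_nonneg (‖v - xt‖), norm_nonneg (v - xt), mul_le_mul_of_nonneg_left (mul_self_le_mul_self (norm_nonneg (v-xt)) hvxD) (mul_nonneg hL hη2)]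
end

section
/- Let F : ℝ^d → ℝ be differentiable, monotone (x ≤ y coordinatewise implies F(x) ≤ F(y)) and concave along nonnegative directions (F(y) ≤ F(x) + ⟨∇F(x), y - x⟩ whenever x ≤ y). Then for any x, x* in the domain with x ≥ 0 and ∇F(x) ≥ 0 componentwise behavior as implied by DR-submodularity, F(x*) - F(x) ≤ ⟨∇F(x), x*⟩, using F(x*) - F(x) ≤ F(x* ∨ x) - F(x) ≤ ⟨∇F(x), (x* - x) ∨ 0⟩ ≤ ⟨∇F(x), x*⟩. -/
open RealInnerProductSpace

theorem max_sub_le_of_nonneg {α : Type*} [AddCommGroup α] [LinearOrder α] [IsOrderedAddMonoid α]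
    {a b : α} (ha : 0 ≤ a) (hb : 0 ≤ b) : max a b - a ≤ b :=
  sub_le_iff_le_add.2 (max_le (le_add_of_nonneg_left hb) (le_add_of_nonneg_right ha))

theorem EuclideanSpace.inner_le_inner_of_nonneg {ι : Type*} [Fintype ι]
    {g u v : EuclideanSpace ℝ ι} (hg : ∀ i, 0 ≤ g i) (huv : ∀ i, u i ≤ v i) :
    ⟪g, u⟫ ≤ ⟪g, v⟫ := by
  simp only [PiLp.inner_apply, RCLike.inner_apply, conj_trivial]
  exact Finset.sum_le_sum fun i _ => mul_le_mul_of_nonneg_right (huv i) (hg i)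

theorem stmt_10 (d : ℕ) (F : EuclideanSpace ℝ (Fin d) → ℝ)
    (gradF : EuclideanSpace ℝ (Fin d) → EuclideanSpace ℝ (Fin d))
    (hmono : ∀ x y : EuclideanSpace ℝ (Fin d), (∀ i, x i ≤ y i) → F x ≤ F y)
    (hconc : ∀ x y : EuclideanSpace ℝ (Fin d), (∀ i, x i ≤ y i) →
      F y ≤ F x + ⟪gradF x, y - x⟫)
    (x xstar : EuclideanSpace ℝ (Fin d))
    (hx : ∀ i, 0 ≤ x i) (hxstar : ∀ i, 0 ≤ xstar i)
    (hgrad : ∀ i, 0 ≤ gradF x i) :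
    F xstar - F x ≤ ⟪gradF x, xstar⟫ := by
  set z : EuclideanSpace ℝ (Fin d) := WithLp.toLp 2 (x.ofLp ⊔ xstar.ofLp)
  calc F xstar - F x ≤ F z - F x := sub_le_sub_right (hmono _ _ fun _ => le_sup_right) _
    _ ≤ ⟪gradF x, z - x⟫ := sub_le_iff_le_add'.2 (hconc _ _ fun _ => le_sup_left)
    _ ≤ ⟪gradF x, xstar⟫ :=
      EuclideanSpace.inner_le_inner_of_nonneg hgrad fun i => max_sub_le_of_nonneg (hx i) (hxstar i)
end
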